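/- The weakening-right rule is not admissible in ML⁺: there exist Γ and B such that Γ ⇒ (empty succedent) is derivable in ML⁺ but Γ ⇒ B is not. -/

import Mathlib

/-- First-order terms: variables and constants. -/
inductive Tm : Type
  | var : ℕ → Tm
  | const : ℕ → Tm
deriving DecidableEq

/-- First-order formulas (negation primitive, as in LJ). -/
inductive Fml : Type
  | atom : ℕ → List Tm → Fml
  | and : Fml → Fml → Fml
  | or : Fml → Fml → Fml
  | imp : Fml → Fml → Fml
  | neg : Fml → Fml
  | all : ℕ → Fml → Fml
  | ex : ℕ → Fml → Fml

/-- Substitute term `t` for variable `x` in a term. -/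
def Tm.subst (x : ℕ) (t : Tm) : Tm → Tm
  | .var y => if y = x then t else .var y
  | .const c => .const c

/-- Substitute term `t` for the free occurrences of variable `x`. -/
def Fml.subst (x : ℕ) (t : Tm) : Fml → Fml
  | .atom p ts => .atom p (ts.map (Tm.subst x t))
  | .and A B => .and (A.subst x t) (B.subst x t)
  | .or A B => .or (A.subst x t) (B.subst x t)
  | .imp A B => .imp (A.subst x t) (B.subst x t)
  | .neg A => .neg (A.subst x t)
  | .all y A => if y = x then .all y A else .all y (A.subst x t)
  | .ex y A => if y = x then .ex y A else .ex y (A.subst x t)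

def Tm.freeIn (x : ℕ) : Tm → Prop
  | .var y => y = x
  | .const _ => False

/-- `x` occurs free in a formula. -/
def Fml.freeIn (x : ℕ) : Fml → Prop
  | .atom _ ts => ∃ s ∈ ts, s.freeIn x
  | .and A B => A.freeIn x ∨ B.freeIn x
  | .or A B => A.freeIn x ∨ B.freeIn x
  | .imp A B => A.freeIn x ∨ B.freeIn x
  | .neg A => A.freeIn x
  | .all y A => y ≠ x ∧ A.freeIn x
  | .ex y A => y ≠ x ∧ A.freeIn x

/-- Which optional rules a sequent-calculus system has:
`cutOK C` says cuts on formula `C` are allowed, `wr` is weakening-right,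
`tnd` is the tertium-non-datur rule, and `efq` is the family of initial
sequents `⇒ ¬A → (A → B)`. -/
structure Rules where
  cutOK : Fml → Prop
  wr : Prop
  tnd : Prop
  efq : Prop

/-- Derivability of a single-succedent sequent `Γ ⇒ Δ` (with `Δ` at most one
formula) in LJ-style sequent calculus without weakening-right, with the
optional rules given by `R`.  -/
inductive Deriv (R : Rules) : List Fml → Option Fml → Prop
  -- initial sequents
  | id (A : Fml) : Deriv R [A] (some A)
  | efq (h : R.efq) (A B : Fml) :
      Deriv R [] (some ((A.neg).imp (A.imp B)))
  -- structural rules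
  | xchg {Γ₁ Γ₂ : List Fml} {A B : Fml} {Δ : Option Fml} :
      Deriv R (Γ₁ ++ A :: B :: Γ₂) Δ → Deriv R (Γ₁ ++ B :: A :: Γ₂) Δ
  | contr {Γ : List Fml} {A : Fml} {Δ : Option Fml} :
      Deriv R (A :: A :: Γ) Δ → Deriv R (A :: Γ) Δ
  | wl {Γ : List Fml} {Δ : Option Fml} (A : Fml) :
      Deriv R Γ Δ → Deriv R (A :: Γ) Δ
  | wr (h : R.wr) {Γ : List Fml} (A : Fml) :
      Deriv R Γ none → Deriv R Γ (some A)
  | cut {Γ Θ : List Fml} {A : Fml} {Δ : Option Fml} (h : R.cutOK A) :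
      Deriv R Γ (some A) → Deriv R (A :: Θ) Δ → Deriv R (Γ ++ Θ) Δ
  -- tertium non datur rule
  | tnd (h : R.tnd) {Γ : List Fml} {A : Fml} {Δ : Option Fml} :
      Deriv R (A :: Γ) Δ → Deriv R (A.neg :: Γ) Δ → Deriv R Γ Δ
  -- logical rules
  | andL₁ {Γ : List Fml} {A B : Fml} {Δ : Option Fml} :
      Deriv R (A :: Γ) Δ → Deriv R (A.and B :: Γ) Δ
  | andL₂ {Γ : List Fml} {A B : Fml} {Δ : Option Fml} :
      Deriv R (B :: Γ) Δ → Deriv R (A.and B :: Γ) Δ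
  | andR {Γ : List Fml} {A B : Fml} :
      Deriv R Γ (some A) → Deriv R Γ (some B) → Deriv R Γ (some (A.and B))
  | orL {Γ : List Fml} {A B : Fml} {Δ : Option Fml} :
      Deriv R (A :: Γ) Δ → Deriv R (B :: Γ) Δ → Deriv R (A.or B :: Γ) Δ
  | orR₁ {Γ : List Fml} {A B : Fml} :
      Deriv R Γ (some A) → Deriv R Γ (some (A.or B))
  | orR₂ {Γ : List Fml} {A B : Fml} :
      Deriv R Γ (some B) → Deriv R Γ (some (A.or B))
  | impL {Γ Θ : List Fml} {A B : Fml} {Δ : Option Fml} :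
      Deriv R Γ (some A) → Deriv R (B :: Θ) Δ →
      Deriv R (A.imp B :: Γ ++ Θ) Δ
  | impR {Γ : List Fml} {A B : Fml} :
      Deriv R (A :: Γ) (some B) → Deriv R Γ (some (A.imp B))
  | negL {Γ : List Fml} {A : Fml} :
      Deriv R Γ (some A) → Deriv R (A.neg :: Γ) none
  | negR {Γ : List Fml} {A : Fml} :
      Deriv R (A :: Γ) none → Deriv R Γ (some A.neg)
  | allL {Γ : List Fml} {x : ℕ} {A : Fml} {Δ : Option Fml} (t : Tm) :
      Deriv R (A.subst x t :: Γ) Δ → Deriv R (Fml.all x A :: Γ) Δ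
  | allR {Γ : List Fml} {x : ℕ} {A : Fml} (a : ℕ)
      (hΓ : ∀ F ∈ Γ, ¬ F.freeIn a) (hA : ¬ (Fml.all x A).freeIn a) :
      Deriv R Γ (some (A.subst x (Tm.var a))) → Deriv R Γ (some (Fml.all x A))
  | exL {Γ : List Fml} {x : ℕ} {A : Fml} {Δ : Option Fml} (a : ℕ)
      (hΓ : ∀ F ∈ Γ, ¬ F.freeIn a) (hA : ¬ (Fml.ex x A).freeIn a)
      (hΔ : ∀ F, Δ = some F → ¬ F.freeIn a) :
      Deriv R (A.subst x (Tm.var a) :: Γ) Δ → Deriv R (Fml.ex x A :: Γ) Δ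
  | exR {Γ : List Fml} {x : ℕ} {A : Fml} (t : Tm) :
      Deriv R Γ (some (A.subst x t)) → Deriv R Γ (some (Fml.ex x A))

/-- ML: LJ without weakening-right (cut allowed on any formula). -/
def ML : Rules := ⟨fun _ => True, False, False, False⟩

/-- Cut-free ML. -/
def MLcf : Rules := ⟨fun _ => False, False, False, False⟩

/-- ML⁺: ML plus the tertium-non-datur rule. -/
def MLplus : Rules := ⟨fun _ => True, False, True, False⟩

/-- Cut-free ML⁺. -/
def MLplusCF : Rules := ⟨fun _ => False, False, True, False⟩

/-- ML plus the initial sequents ⇒ ¬A → (A → B). -/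
def MLefq : Rules := ⟨fun _ => True, False, False, True⟩

/-- ML plus the weakening-right rule. -/
def MLwr : Rules := ⟨fun _ => True, True, False, False⟩

/-- Semantic interpretation: `⊥` (empty succedent) is read as `True`,
atoms by their index, terms ignored. -/
def ev : Fml → Prop
  | .atom p _ => p = 0
  | .and A B => ev A ∧ ev B
  | .or A B => ev A ∨ ev B
  | .imp A B => ev A → ev B
  | .neg _ => True
  | .all _ A => ev A
  | .ex _ A => ev A

def evΔ : Option Fml → Prop
  | none => True
  | some B => ev B

lemma ev_subst (x : ℕ) (t : Tm) (A : Fml) : ev (A.subst x t) ↔ ev A := by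
  induction A with
  | atom p ts => simp [Fml.subst, ev]
  | and A B ihA ihB => simp [Fml.subst, ev, ihA, ihB]
  | or A B ihA ihB => simp [Fml.subst, ev, ihA, ihB]
  | imp A B ihA ihB => simp [Fml.subst, ev, ihA, ihB]
  | neg A ih => simp [Fml.subst, ev]
  | all y A ih =>
    by_cases h : y = x <;> simp [Fml.subst, h, ev, ih]
  | ex y A ih =>
    by_cases h : y = x <;> simp [Fml.subst, h, ev, ih]

lemma sound {Γ : List Fml} {Δ : Option Fml} (d : Deriv MLplus Γ Δ)
    (hΓ : ∀ F ∈ Γ, ev F) : evΔ Δ := by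
  induction d with
  | id A => exact hΓ A (by simp)
  | efq h A B => cases h
  | xchg d ih =>
    apply ih
    intro F hF
    apply hΓ
    simp only [List.mem_append, List.mem_cons] at hF ⊢
    tauto
  | contr d ih =>
    apply ih
    intro F hF
    apply hΓ
    simp only [List.mem_cons] at hF ⊢
    tauto
  | wl A d ih => exact ih fun F hF => hΓ F (by simp [hF])
  | wr h A d ih => cases h
  | cut h d₁ d₂ ih₁ ih₂ =>
    apply ih₂
    intro F hF
    simp only [List.mem_cons] at hF
    rcases hF with rfl | hF
    · exact ih₁ fun G hG => hΓ G (by simp [hG])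
    · exact hΓ F (by simp [hF])
  | tnd h d₁ d₂ ih₁ ih₂ =>
    rename_i Γ' A Δ'
    by_cases hA : ev A
    · apply ih₁
      intro F hF
      simp only [List.mem_cons] at hF
      rcases hF with rfl | hF
      · exact hA
      · exact hΓ F hF
    · apply ih₂
      intro F hF
      simp only [List.mem_cons] at hF
      rcases hF with rfl | hF
      · exact trivial
      · exact hΓ F hF
  | andL₁ d ih =>
    have hh := hΓ _ (List.mem_cons_self)
    apply ih
    intro F hF
    simp only [List.mem_cons] at hF
    rcases hF with rfl | hF
    · exact hh.1
    · exact hΓ F (by simp [hF])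
  | andL₂ d ih =>
    have hh := hΓ _ (List.mem_cons_self)
    apply ih
    intro F hF
    simp only [List.mem_cons] at hF
    rcases hF with rfl | hF
    · exact hh.2
    · exact hΓ F (by simp [hF])
  | andR d₁ d₂ ih₁ ih₂ => exact ⟨ih₁ hΓ, ih₂ hΓ⟩
  | orL d₁ d₂ ih₁ ih₂ =>
    rcases hΓ _ (List.mem_cons_self) with h | h
    · apply ih₁
      intro F hF
      simp only [List.mem_cons] at hF
      rcases hF with rfl | hF
      · exact h
      · exact hΓ F (by simp [hF])
    · apply ih₂
      intro F hF
      simp only [List.mem_cons] at hF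
      rcases hF with rfl | hF
      · exact h
      · exact hΓ F (by simp [hF])
  | orR₁ d ih => exact Or.inl (ih hΓ)
  | orR₂ d ih => exact Or.inr (ih hΓ)
  | impL d₁ d₂ ih₁ ih₂ =>
    have hAB := hΓ _ (List.mem_cons_self)
    have hA := ih₁ fun F hF => hΓ F (by simp [hF])
    apply ih₂
    intro F hF
    simp only [List.mem_cons] at hF
    rcases hF with rfl | hF
    · exact hAB hA
    · exact hΓ F (by simp [hF])
  | impR d ih =>
    intro hA
    apply ih
    intro F hF
    simp only [List.mem_cons] at hF
    rcases hF with rfl | hF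
    · exact hA
    · exact hΓ F hF
  | negL d ih => trivial
  | negR d ih => trivial
  | allL t d ih =>
    have hh := hΓ _ (List.mem_cons_self)
    apply ih
    intro F hF
    simp only [List.mem_cons] at hF
    rcases hF with rfl | hF
    · exact (ev_subst _ _ _).mpr hh
    · exact hΓ F (by simp [hF])
  | allR a h₁ h₂ d ih =>
    have h := ih hΓ
    simp only [evΔ] at h ⊢
    simp only [ev]
    exact (ev_subst _ _ _).mp h
  | exL a h₁ h₂ h₃ d ih =>
    have hh := hΓ _ (List.mem_cons_self)
    apply ih
    intro F hF
    simp only [List.mem_cons] at hF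
    rcases hF with rfl | hF
    · exact (ev_subst _ _ _).mpr hh
    · exact hΓ F (by simp [hF])
  | exR t d ih =>
    have h := ih hΓ
    simp only [evΔ] at h ⊢
    simp only [ev]
    exact (ev_subst _ _ _).mp h

/-- weakening-right is not admissible in ML⁺. -/
theorem wr_not_admissible_MLplus :
    ∃ (Γ : List Fml) (B : Fml),
      Deriv MLplus Γ none ∧ ¬ Deriv MLplus Γ (some B) := by
  refine ⟨[Fml.neg (.atom 0 []), .atom 0 []], .atom 1 [], ?_, ?_⟩
  · exact Deriv.negL (Deriv.id _)
  · intro d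
    have := sound d (by
      intro F hF
      simp only [List.mem_cons, List.not_mem_nil, or_false] at hF
      rcases hF with rfl | rfl
      · trivial
      · rfl)
    exact absurd this (by simp [evΔ, ev])
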